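/- Let G be a simple graph with n vertices and m edges, r ≥ 2, and r⃗ = (n−1,…,n−1) ∈ ℤʳ. The map Φ sending a cell c = (c₁,…,c_r) to the r-tuple (x₁,…,x_r), where x_k is the unique missed vertex if c_k = V(G)∖{x_k} and the unique edge if c_k = {x_k} ∪ (V(G)∖{endpoints of x_k}), is a bijection between the i-cells of S_{r⃗}(G) and the valid i-edge-r-tuples, for every i. -/

import Mathlib

/-- Two elements of `V(G) ∪ E(G)` overlap if their point sets (a vertex, or a
closed edge together with its endpoints) intersect. -/
def overlap {V : Type*} : V ⊕ Sym2 V → V ⊕ Sym2 V → Prop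
  | .inl v, .inl w => v = w
  | .inl v, .inr e => v ∈ e
  | .inr e, .inl v => v ∈ e
  | .inr e, .inr f => ∃ v, v ∈ e ∧ v ∈ f

/-- A cell of the grouped Stirling complex `S_{r⃗}(G)`: an `r`-tuple of sets of
vertices and edges of `G`, with prescribed cardinalities `ℓ i`, covering every
vertex, and pairwise disjoint within each color. -/
def IsCell {V : Type*} [DecidableEq V] (G : SimpleGraph V) {r : ℕ} (ℓ : Fin r → ℕ)
    (c : Fin r → Finset (V ⊕ Sym2 V)) : Prop :=
  (∀ i, (c i).card = ℓ i) ∧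
  (∀ i, ∀ e : Sym2 V, Sum.inr e ∈ c i → e ∈ G.edgeSet) ∧
  (∀ v : V, ∃ i, Sum.inl v ∈ c i) ∧
  (∀ i, ∀ x ∈ c i, ∀ y ∈ c i, x ≠ y → ¬ overlap x y)

/-- The dimension of a cell: the total number of edges appearing among the
components, counted with multiplicity over the colors. -/
def cellDim {V : Type*} {r : ℕ} (c : Fin r → Finset (V ⊕ Sym2 V)) : ℕ :=
  ∑ i, ((c i).filter (fun x => x.isRight)).card

/-- The set corresponding to an entry of an `i`-edge-`r`-tuple: a vertex `v`
expands to `V(G)∖{v}`, an edge `e` to `{e} ∪ (V(G)∖{endpoints of e})`. -/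
def expandEntry {V : Type*} [Fintype V] [DecidableEq V] :
    V ⊕ Sym2 V → Finset (V ⊕ Sym2 V)
  | .inl v => (Finset.univ.erase v).image Sum.inl
  | .inr e => insert (Sum.inr e) ((Finset.univ.filter (fun v => v ∉ e)).image Sum.inl)

/-!
The components of a cell with `r⃗ = (n−1,…,n−1)` have disjoint supports, so a component `S`
satisfies `#S + #(edges of S) ≤ n`, which leaves room for at most one edge. Hence `S` is either
`V(G)` minus a vertex or an edge together with the vertices off it, i.e. `S = expandEntry y` for a
unique `y`. Under this correspondence, covering all vertices is exactly validity of the tuple, and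
the dimension is the number of edge entries.
-/

section

open Finset

variable {V : Type*} [DecidableEq V]

def entrySupport : V ⊕ Sym2 V → Finset V
  | .inl v => {v}
  | .inr e => e.toFinset

lemma overlap_of_mem_entrySupport {x y : V ⊕ Sym2 V} {v : V} (hx : v ∈ entrySupport x)
    (hy : v ∈ entrySupport y) : overlap x y := by
  rcases x with a | e <;> rcases y with b | f <;>
    simp_all [entrySupport, overlap, Sym2.mem_toFinset]
  exact ⟨v, hx, hy⟩

lemma card_entrySupport {x : V ⊕ Sym2 V} (hx : ∀ e, x = Sum.inr e → ¬ e.IsDiag) :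
    #(entrySupport x) = 1 + if x.isRight then 1 else 0 := by
  rcases x with v | e
  · simp [entrySupport]
  · simp [entrySupport, Sym2.card_toFinset_of_not_isDiag e (hx e rfl)]

variable [Fintype V]

@[simp] lemma inl_mem_expandEntry {v : V} {y : V ⊕ Sym2 V} :
    Sum.inl v ∈ expandEntry y ↔ ¬ Sum.elim (fun w => w = v) (fun e => v ∈ e) y := by
  rcases y with w | e <;> simp [expandEntry, eq_comm]

@[simp] lemma inr_mem_expandEntry {e : Sym2 V} {y : V ⊕ Sym2 V} :
    Sum.inr e ∈ expandEntry y ↔ y = Sum.inr e := by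
  rcases y with w | f <;> simp [expandEntry, eq_comm]

lemma expandEntry_injective : Function.Injective (expandEntry (V := V)) := by
  intro y y' hyy'
  rcases y' with w | f
  · rcases y with v | e
    · simpa using Finset.ext_iff.1 hyy' (Sum.inl w)
    · simpa using (Finset.ext_iff.1 hyy' (Sum.inr e)).1
  · simpa using (Finset.ext_iff.1 hyy' (Sum.inr f)).2

lemma card_expandEntry {y : V ⊕ Sym2 V} (hy : ∀ e, y = Sum.inr e → ¬ e.IsDiag) :
    #(expandEntry y) = Fintype.card V - 1 := by
  rcases y with v | e
  · simp [expandEntry, card_image_of_injective _ Sum.inl_injective]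
  · have hcompl : ({v | v ∉ e} : Finset V) = e.toFinsetᶜ := by
      ext; simp [Sym2.mem_toFinset]
    have htwo := Sym2.card_toFinset_of_not_isDiag e (hy e rfl)
    have hle := card_le_univ e.toFinset
    rw [expandEntry, card_insert_of_notMem (by simp), card_image_of_injective _ Sum.inl_injective,
      hcompl, card_compl]
    omega

lemma not_overlap_of_mem_expandEntry (y : V ⊕ Sym2 V) :
    ∀ x ∈ expandEntry y, ∀ z ∈ expandEntry y, x ≠ z → ¬ overlap x z := by
  intro x hx z hz hxz
  rcases y with w | e <;> rcases x with a | f <;> rcases z with b | g <;>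
    simp_all [overlap]

lemma card_filter_isRight_expandEntry (y : V ⊕ Sym2 V) :
    #{x ∈ expandEntry y | x.isRight} = if y.isRight then 1 else 0 := by
  rcases y with v | e
  · simp [expandEntry, filter_image]
  · simp [expandEntry, filter_insert, filter_image]

lemma cellDim_expandEntry {r : ℕ} (x : Fin r → V ⊕ Sym2 V) :
    cellDim (fun k => expandEntry (x k)) = #{k | (x k).isRight} := by
  simp only [cellDim, card_filter_isRight_expandEntry]
  rw [card_filter]

lemma isCell_expandEntry_iff (G : SimpleGraph V) {r : ℕ} (x : Fin r → V ⊕ Sym2 V) :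
    IsCell G (fun _ => Fintype.card V - 1) (fun k => expandEntry (x k)) ↔
      (∀ k, ∀ e : Sym2 V, x k = Sum.inr e → e ∈ G.edgeSet) ∧
      ¬ ∃ v : V, ∀ k, Sum.elim (fun w => w = v) (fun e => v ∈ e) (x k) := by
  simp only [IsCell, inr_mem_expandEntry, inl_mem_expandEntry, not_exists, not_forall]
  constructor
  · rintro ⟨-, hedge, hcover, -⟩
    exact ⟨hedge, hcover⟩
  · rintro ⟨hedge, hcover⟩
    exact ⟨fun k => card_expandEntry fun e he => G.not_isDiag_of_mem_edgeSet (hedge k e he),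
      hedge, hcover, fun k => not_overlap_of_mem_expandEntry (x k)⟩

lemma card_add_card_filter_isRight_le {S : Finset (V ⊕ Sym2 V)}
    (hdiag : ∀ e, Sum.inr e ∈ S → ¬ e.IsDiag)
    (hS : ∀ x ∈ S, ∀ y ∈ S, x ≠ y → ¬ overlap x y) :
    #S + #{x ∈ S | x.isRight} ≤ Fintype.card V :=
  calc #S + #{x ∈ S | x.isRight} = ∑ x ∈ S, #(entrySupport x) := by
        rw [card_filter, card_eq_sum_ones, ← sum_add_distrib]
        exact sum_congr rfl fun x hx => (card_entrySupport fun e he => hdiag e (he ▸ hx)).symm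
    _ = #(S.biUnion entrySupport) := by
        refine (card_biUnion fun x hx y hy hxy => disjoint_left.2 fun v hvx hvy => ?_).symm
        exact hS x hx y hy hxy (overlap_of_mem_entrySupport hvx hvy)
    _ ≤ Fintype.card V := card_le_univ _

lemma exists_eq_expandEntry [Nonempty V] {S : Finset (V ⊕ Sym2 V)}
    (hcard : #S = Fintype.card V - 1) (hdiag : ∀ e, Sum.inr e ∈ S → ¬ e.IsDiag)
    (hS : ∀ x ∈ S, ∀ y ∈ S, x ≠ y → ¬ overlap x y) :
    ∃ y, S = expandEntry y := by
  have hpos := Fintype.card_pos (α := V)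
  by_cases hedge : ∃ e, Sum.inr e ∈ S
  · obtain ⟨e, he⟩ := hedge
    have hone : #{x ∈ S | x.isRight} ≤ 1 := by
      have := card_add_card_filter_isRight_le hdiag hS
      omega
    refine ⟨Sum.inr e, eq_of_subset_of_card_le (fun x hx => ?_) ?_⟩
    · rcases x with w | f
      · simpa [overlap] using hS _ hx _ he (by simp)
      · simpa using (card_le_one.1 hone (Sum.inr f) (by simp [hx]) (Sum.inr e) (by simp [he])).symm
    · rw [card_expandEntry fun f hf => hdiag f (hf ▸ he), hcard]
  · push Not at hedge
    obtain ⟨v, hv⟩ : ∃ v, Sum.inl v ∉ S := by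
      by_contra! hall
      have hsub : univ.image (Sum.inl : V → V ⊕ Sym2 V) ⊆ S := by
        simpa [subset_iff] using hall
      have := card_le_card hsub
      rw [card_image_of_injective _ Sum.inl_injective, card_univ] at this
      omega
    refine ⟨Sum.inl v, eq_of_subset_of_card_le (fun x hx => ?_) ?_⟩
    · rcases x with w | f
      · simpa using fun hwv : v = w => hv (hwv ▸ hx)
      · exact absurd hx (hedge f)
    · rw [card_expandEntry (by simp), hcard]

end

theorem cells_equiv_valid_tuples_general {V : Type*} [Fintype V] [DecidableEq V]
    (G : SimpleGraph V) (n r i : ℕ) (hn : 2 ≤ n)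
    (h : Fintype.card V = n) :
    ∃ Φ : {c : Fin r → Finset (V ⊕ Sym2 V) //
            IsCell G (fun _ => n - 1) c ∧ cellDim c = i} →
          {x : Fin r → V ⊕ Sym2 V //
            (∀ k, ∀ e : Sym2 V, x k = Sum.inr e → e ∈ G.edgeSet) ∧
            (Finset.univ.filter (fun k => ((x k).isRight : Prop))).card = i ∧
            ¬ ∃ v : V, ∀ k, Sum.elim (fun w => w = v) (fun e => v ∈ e) (x k)},
      Function.Bijective Φ ∧ ∀ c k, (c : _).1 k = expandEntry ((Φ c).1 k) := by
  subst h
  have : Nonempty V := Fintype.card_pos_iff.1 (by omega)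
  choose Φ hΦ using fun (c : Fin r → Finset (V ⊕ Sym2 V))
    (hc : IsCell G (fun _ => Fintype.card V - 1) c) k =>
    exists_eq_expandEntry (hc.1 k) (fun e he => G.not_isDiag_of_mem_edgeSet (hc.2.1 k e he))
      (hc.2.2.2 k)
  refine ⟨fun c => ⟨Φ c.1 c.2.1, ?valid⟩,
    Function.bijective_iff_has_inverse.2
      ⟨fun x => ⟨fun k => expandEntry (x.1 k), ?cell⟩, ?leftInv, ?rightInv⟩,
    fun c k => hΦ _ _ k⟩
  case valid =>
    obtain ⟨c, hcell, hdim⟩ := c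
    have hc : c = fun k => expandEntry (Φ c hcell k) := funext (hΦ c hcell)
    obtain ⟨hedge, hcover⟩ := (isCell_expandEntry_iff G _).1 (hc ▸ hcell)
    exact ⟨hedge, (cellDim_expandEntry _).symm.trans (hc ▸ hdim), hcover⟩
  case cell =>
    exact ⟨(isCell_expandEntry_iff G x.1).2 ⟨x.2.1, x.2.2.2⟩,
      (cellDim_expandEntry x.1).trans x.2.2.1⟩
  case leftInv => exact fun c => Subtype.ext (funext (hΦ _ _)).symm
  case rightInv =>
    exact fun x => Subtype.ext <| funext fun k =>
      (expandEntry_injective (hΦ (fun k => expandEntry (x.1 k)) _ k)).symm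

/-- For `r⃗ = (n−1,…,n−1) ∈ ℤʳ`, the map `Φ` sending a cell `c` to the tuple
of missed vertices / colored edges is a bijection between the `i`-cells of
`S_{r⃗}(G)` and the valid `i`-edge-`r`-tuples. -/
theorem cells_equiv_valid_tuples {V : Type*} [Fintype V] [DecidableEq V]
    (G : SimpleGraph V) [DecidableRel G.Adj] (n r i : ℕ) (hn : 2 ≤ n)
    (h : Fintype.card V = n) (hr : 2 ≤ r) :
    ∃ Φ : {c : Fin r → Finset (V ⊕ Sym2 V) //
            IsCell G (fun _ => n - 1) c ∧ cellDim c = i} →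
          {x : Fin r → V ⊕ Sym2 V //
            (∀ k, ∀ e : Sym2 V, x k = Sum.inr e → e ∈ G.edgeSet) ∧
            (Finset.univ.filter (fun k => ((x k).isRight : Prop))).card = i ∧
            ¬ ∃ v : V, ∀ k, Sum.elim (fun w => w = v) (fun e => v ∈ e) (x k)},
      Function.Bijective Φ ∧ ∀ c k, (c : _).1 k = expandEntry ((Φ c).1 k) :=
  cells_equiv_valid_tuples_general G n r i hn h
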